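/- arXiv:2203.13622 — 3 statements merged into one kernel-verified Lean document; each statement's English description precedes it below -/
import Mathlib

section
/- Let D be a cocomplete, locally small category. Suppose there is a set Φ of objects of D such that every object x of D admits a morphism x → y to some y ∈ Φ. Then D has a terminal object. -/
open CategoryTheory CategoryTheory.Limits

/-- A cocomplete, locally small category with a small weakly terminal set of objects
has a terminal object. -/
theorem cocomplete_with_weakly_terminal_set_hasTerminal
    {D : Type u} [Category.{v} D] [HasColimits D]
    (Φ : Set D) [Small.{v} Φ]
    (h : ∀ x : D, ∃ y ∈ Φ, Nonempty (x ⟶ y)) :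
    HasTerminal D := by
  haveI : HasLimits Dᵒᵖ := inferInstance
  let B : Shrink.{v} Φ → Dᵒᵖ := fun i => Opposite.op ((equivShrink Φ).symm i : D)
  have hB : ∀ A : Dᵒᵖ, ∃ i, Nonempty (B i ⟶ A) := by
    intro A
    obtain ⟨y, hy, ⟨f⟩⟩ := h A.unop
    refine ⟨equivShrink Φ ⟨y, hy⟩, ⟨?_⟩⟩
    simpa [B] using f.op
  obtain ⟨T, hT⟩ := has_weakly_initial_of_weakly_initial_set_and_hasProducts hB
  haveI : HasInitial Dᵒᵖ := hasInitial_of_weakly_initial_and_hasWideEqualizers hT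
  exact hasTerminal_of_hasInitial_op
end

section
/- For a locally compact Hausdorff space B, the relative Stone–Čech compactification β_B is left adjoint to the inclusion of the full subcategory of Hausdorff proper B-spaces into the category of all B-spaces; i.e., this subcategory is reflective. -/
open scoped ZeroAtInfty BoundedContinuousFunction
open WeakDual Filter

/-- The pullback `r*(h) = h ∘ r` of a `C₀` function along a continuous map, as a bounded
continuous function. -/
noncomputable def pullbackBCF {X B : Type*} [TopologicalSpace X] [TopologicalSpace B]
    (r : C(X, B)) (h : C₀(B, ℂ)) : X →ᵇ ℂ :=
  h.toBCF.compContinuous r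

/-- The commutative C*-algebra `H_X = C_b(X) · r*(C₀(B))`, realised as the closure of the
non-unital star subalgebra of `C_b(X)` generated by the products `f · r*(h)`. -/
noncomputable def relSCAlg {X B : Type*} [TopologicalSpace X] [TopologicalSpace B]
    (r : C(X, B)) : NonUnitalStarSubalgebra ℂ (X →ᵇ ℂ) :=
  (NonUnitalStarAlgebra.adjoin ℂ
    {w : X →ᵇ ℂ | ∃ f : X →ᵇ ℂ, ∃ h : C₀(B, ℂ), w = f * pullbackBCF r h}).topologicalClosure

/-- The relative Stone–Čech compactification `β_B X` of a `B`-space `(X, r)`: the character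
space (spectrum) of `H_X = C_b(X) · r*(C₀(B))`. -/
noncomputable def RelSC {X B : Type*} [TopologicalSpace X] [TopologicalSpace B]
    (r : C(X, B)) :=
  characterSpace ℂ (relSCAlg r)

/-- Evaluation at a point `x : X`, as an element of the weak dual of `H_X`. -/
noncomputable def relSCEvalChar {X B : Type*} [TopologicalSpace X] [TopologicalSpace B]
    (r : C(X, B)) (x : X) : WeakDual ℂ (relSCAlg r) :=
  (BoundedContinuousFunction.evalCLM ℂ x).comp
    (⟨{ toFun := fun f => (f : X →ᵇ ℂ),
        map_add' := fun _ _ => rfl,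
        map_smul' := fun _ _ => rfl }, continuous_subtype_val⟩ :
      relSCAlg r →L[ℂ] (X →ᵇ ℂ))

/-- The canonical map `i : X → β_B X`, sending a point to the evaluation character. -/
noncomputable def relSCMap {X B : Type*} [TopologicalSpace X] [TopologicalSpace B]
    [LocallyCompactSpace B] [T2Space B] (r : C(X, B)) (x : X) : RelSC r := by
  refine ⟨relSCEvalChar r x, ?_, fun f g => rfl⟩
  obtain ⟨h, h_comp, -, hx⟩ := exists_continuous_nonneg_pos (r x)
  have hC0 : Tendsto (fun b => (h b : ℂ)) (Filter.cocompact B) (nhds 0) := by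
    exact ((Complex.continuous_ofReal.tendsto 0).comp
      (HasCompactSupport.is_zero_at_infty h_comp))
  set h' : C₀(B, ℂ) := ⟨⟨fun b => (h b : ℂ), Complex.continuous_ofReal.comp h.continuous⟩, hC0⟩
  have hmem : (1 : X →ᵇ ℂ) * pullbackBCF r h' ∈ relSCAlg r :=
    (NonUnitalStarAlgebra.adjoin ℂ _).le_topologicalClosure
      (NonUnitalStarAlgebra.subset_adjoin ℂ _ ⟨1, h', rfl⟩)
  intro h0
  have h2 : ((1 : X →ᵇ ℂ) * pullbackBCF r h') x = 0 := by
    have := congrArg (fun φ : WeakDual ℂ (relSCAlg r) => φ ⟨_, hmem⟩) h0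
    exact this
  apply hx
  have h3 : (h (r x) : ℂ) = 0 := by
    simpa [pullbackBCF, h', BoundedContinuousFunction.coe_compContinuous] using h2
  exact_mod_cast h3

/-! By the general adjoint functor theorem it suffices that Hausdorff proper `B`-spaces are closed
under limits and satisfy the solution set condition. A limit of `B`-spaces is the closed subspace
of compatible families in `B × ∏ⱼ Zⱼ`; its map to `B` is proper because it is the restriction of
the proper map `id × ∏ⱼ rⱼ`, followed by the inverse of the diagonal of `B`. For the solution set,
every map `A → Z` into a Hausdorff proper `B`-space factors through the closure of its image, which
is again Hausdorff proper, and whose points are determined by the filters they induce on `A`; so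
it is homeomorphic to a space carried by a set of filters on `A`, and such spaces form a set. -/

open CategoryTheory CategoryTheory.Limits Topology

def hausdorffProper (B : Type) [TopologicalSpace B] : ObjectProperty (Over (TopCat.of B)) :=
  fun Z => T2Space Z.left ∧ IsProperMap (Z.hom : Z.left → TopCat.of B)

instance (B : Type) [TopologicalSpace B] : (hausdorffProper B).IsClosedUnderIsomorphisms where
  of_iso {X Y} e := fun ⟨_, hX⟩ => by
    let φ : X.left ≃ₜ Y.left := TopCat.homeoOfIso ((Over.forget _).mapIso e)
    have hY : (Y.hom : Y.left → B) = X.hom ∘ φ.symm := by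
      funext y
      exact (ConcreteCategory.congr_hom (Over.w e.inv) y).symm
    exact ⟨φ.symm.isEmbedding.t2Space, hY ▸ hX.comp φ.symm.isProperMap⟩

namespace OverTopCat

variable {B : Type} [TopologicalSpace B] {J : Type} [Category.{0} J] (F : J ⥤ Over (TopCat.of B))

def limitSet : Set (B × ∀ j, (F.obj j).left) :=
  {p | (∀ j, (F.obj j).hom (p.2 j) = p.1) ∧ ∀ ⦃j j'⦄ (f : j ⟶ j'), (F.map f).left (p.2 j) = p.2 j'}

def limitProj : C(limitSet F, B) := ⟨fun p => p.1.1, by fun_prop⟩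

def limitCone : Cone F where
  pt := Over.mk (TopCat.ofHom (limitProj F))
  π.app j := Over.homMk (TopCat.ofHom ⟨fun p => p.1.2 j, by fun_prop⟩) (by ext p; exact p.2.1 j)
  π.naturality _ _ f := by ext p; exact (p.2.2 f).symm

def limitConeIsLimit : IsLimit (limitCone F) where
  lift s := Over.homMk
    (TopCat.ofHom ⟨fun z => ⟨(s.pt.hom z, fun j => (s.π.app j).left z),
        fun j => ConcreteCategory.congr_hom (Over.w (s.π.app j)) z,
        fun _ _ f => ConcreteCategory.congr_hom (congrArg CommaMorphism.left (s.w f)) z⟩,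
      by fun_prop⟩)
    (by ext z; rfl)
  uniq s m hm := by
    ext z
    refine Subtype.ext (Prod.ext (ConcreteCategory.congr_hom (Over.w m) z) (funext fun j => ?_))
    exact ConcreteCategory.congr_hom (congrArg CommaMorphism.left (hm j)) z

variable [T2Space B] [∀ j, T2Space (F.obj j).left]

theorem isClosed_limitSet : IsClosed (limitSet F) := by
  simp only [limitSet, Set.ofPred_and, Set.ofPred_forall]
  exact (isClosed_iInter fun j => isClosed_eq (by fun_prop) (by fun_prop)).inter
    (isClosed_iInter fun j => isClosed_iInter fun j' => isClosed_iInter fun f =>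
      isClosed_eq (by fun_prop) (by fun_prop))

theorem isProperMap_limitProj (hF : ∀ j, IsProperMap ((F.obj j).hom : (F.obj j).left → B)) :
    IsProperMap (limitProj F) := by
  have hprod : IsProperMap (Prod.map id fun z j => (F.obj j).hom (z j) :
      B × (∀ j, (F.obj j).left) → B × (J → B)) :=
    isProperMap_id.prodMap (IsProperMap.pi_map hF)
  refine isProperMap_of_comp_of_inj (g := fun b : B => (b, fun _ : J => b)) (by fun_prop)
    (by fun_prop) ?_ fun b b' h => congrArg Prod.fst h
  convert hprod.restrict (isClosed_limitSet F) using 1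
  funext p
  exact Prod.ext rfl (funext fun j => (p.2.1 j).symm)

end OverTopCat

instance (B : Type) [TopologicalSpace B] [T2Space B] (J : Type) [Category.{0} J] :
    (hausdorffProper B).IsClosedUnderLimitsOfShape J where
  limitsOfShape_le X := fun ⟨h⟩ => by
    have := fun j => (h.prop_diag_obj j).1
    refine (hausdorffProper B).prop_of_iso
      (h.isLimit.conePointUniqueUpToIso (OverTopCat.limitConeIsLimit h.diag)).symm
      ⟨inferInstanceAs (T2Space (OverTopCat.limitSet h.diag)), ?_⟩
    exact OverTopCat.isProperMap_limitProj h.diag fun j => (h.prop_diag_obj j).2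

instance (B : Type) [TopologicalSpace B] [T2Space B] :
    HasLimits (hausdorffProper B).FullSubcategory :=
  ⟨fun _ _ => inferInstance⟩

instance (B : Type) [TopologicalSpace B] [T2Space B] : PreservesLimits (hausdorffProper B).ι :=
  ⟨fun {_} _ => inferInstance⟩

theorem injOn_comap_nhds_closure_range {α X : Type*} [TopologicalSpace X] [T2Space X]
    (f : α → X) : Set.InjOn (fun x => comap f (𝓝 x)) (closure (Set.range f)) := by
  intro x hx y _ (hxy : comap f (𝓝 x) = comap f (𝓝 y))
  by_contra hne
  have hdisj : Disjoint (comap f (𝓝 x)) (comap f (𝓝 y)) :=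
    disjoint_comap (disjoint_nhds_nhds.2 hne)
  have hneBot : NeBot (comap f (𝓝 x)) := comap_neBot_iff.2 fun t ht => by
    obtain ⟨_, hzt, a, rfl⟩ := mem_closure_iff_nhds.1 hx t ht
    exact ⟨a, hzt⟩
  rw [← hxy, disjoint_self] at hdisj
  exact hneBot.ne hdisj

section SolutionSet

variable {B : Type} [TopologicalSpace B] (A : Over (TopCat.of B))

-- The carrier is a set of filters on `A` so that these spaces form a small type.
structure FilterSpaceUnder where
  carrier : Set (Filter A.left)
  [topology : TopologicalSpace carrier]
  [t2 : T2Space carrier]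
  proj : C(carrier, B)
  isProperMap_proj : IsProperMap proj
  unit : C(A.left, carrier)
  proj_unit : ∀ a, proj (unit a) = A.hom a

attribute [instance] FilterSpaceUnder.topology FilterSpaceUnder.t2

namespace FilterSpaceUnder

variable {A} (M : FilterSpaceUnder A)

def obj : (hausdorffProper B).FullSubcategory :=
  ⟨Over.mk (TopCat.ofHom M.proj), M.t2, M.isProperMap_proj⟩

def hom : A ⟶ (hausdorffProper B).ι.obj M.obj :=
  Over.homMk (TopCat.ofHom M.unit) (by ext a; exact M.proj_unit a)

end FilterSpaceUnder

theorem exists_filterSpaceUnder_factorization (X : (hausdorffProper B).FullSubcategory)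
    (h : A ⟶ (hausdorffProper B).ι.obj X) :
    ∃ (M : FilterSpaceUnder A) (g : M.obj ⟶ X), M.hom ≫ (hausdorffProper B).ι.map g = h := by
  obtain ⟨Z, _, hZ⟩ := X
  let f : C(A.left, Z.left) := h.left.hom
  let S := closure (Set.range f)
  let m : S → Filter A.left := fun x => comap f (𝓝 x)
  have hm : Function.Injective m := fun x y hxy =>
    Subtype.ext (injOn_comap_nhds_closure_range f x.2 y.2 hxy)
  let e : S ≃ Set.range m := Equiv.ofInjective m hm
  let _ : TopologicalSpace (Set.range m) := .induced e.symm inferInstance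
  let E : Set.range m ≃ₜ S := Equiv.toHomeomorphOfIsInducing e.symm ⟨rfl⟩
  let toS : C(A.left, S) := ⟨fun a => ⟨f a, subset_closure (Set.mem_range_self a)⟩, by fun_prop⟩
  let M : FilterSpaceUnder A :=
    { carrier := Set.range m
      t2 := E.isEmbedding.t2Space
      proj := ⟨fun y => Z.hom (E y : Z.left), by fun_prop⟩
      isProperMap_proj := (hZ.restrict isClosed_closure).comp E.isProperMap
      unit := ⟨fun a => E.symm (toS a), by fun_prop⟩
      proj_unit := fun a => by
        simp only [ContinuousMap.coe_mk, Homeomorph.apply_symm_apply]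
        exact ConcreteCategory.congr_hom (Over.w h) a }
  let g : M.obj ⟶ ⟨Z, ‹_›, hZ⟩ :=
    ObjectProperty.homMk (Over.homMk (TopCat.ofHom ⟨fun y => (E y : Z.left), by fun_prop⟩) rfl)
  refine ⟨M, g, ?_⟩
  ext a
  exact congrArg Subtype.val (E.apply_symm_apply (toS a))

theorem solutionSetCondition_hausdorffProper :
    SolutionSetCondition.{0} (hausdorffProper B).ι := fun A =>
  ⟨FilterSpaceUnder A, FilterSpaceUnder.obj, FilterSpaceUnder.hom,
    exists_filterSpaceUnder_factorization A⟩

end SolutionSet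

open CategoryTheory in
theorem hausdorffProper_reflective_in_spaces_over_general
    (B : Type) [TopologicalSpace B] [T2Space B] :
    (ObjectProperty.ι
        (fun Z : Over (TopCat.of B) =>
          T2Space Z.left ∧ IsProperMap (Z.hom : Z.left → TopCat.of B))).IsRightAdjoint :=
  isRightAdjoint_of_preservesLimits_of_solutionSetCondition (hausdorffProper B).ι
    solutionSetCondition_hausdorffProper

open CategoryTheory in
/-- For a locally compact Hausdorff space `B`, the full subcategory of Hausdorff proper
`B`-spaces is reflective in the category of all `B`-spaces: the inclusion functor admits a
left adjoint (given by the relative Stone–Čech compactification `β_B`). -/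
theorem hausdorffProper_reflective_in_spaces_over
    (B : Type) [TopologicalSpace B] [LocallyCompactSpace B] [T2Space B] :
    (ObjectProperty.ι
        (fun Z : Over (TopCat.of B) =>
          T2Space Z.left ∧ IsProperMap (Z.hom : Z.left → TopCat.of B))).IsRightAdjoint :=
  hausdorffProper_reflective_in_spaces_over_general B
end

section
/- Let Z be a locally compact Hausdorff space, X a locally compact Hausdorff space, k : Z → X continuous, and V ⊆ X open. Then the ideal k*(C_0(V))·C_0(Z) of C_0(Z) equals C_0(k⁻¹(V)), i.e., its spectrum is the open subset k⁻¹(V) of Z. -/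
/-!
A product `(g ∘ k) · h` vanishes wherever `k z ∉ V`, and the functions vanishing on a set form a
closed subspace, which gives one inclusion. Conversely, if `w` vanishes off `k⁻¹(V)` and `ε > 0`,
the set where `‖w‖ ≥ ε` is compact and `k` maps it into `V`; a compactly supported Urysohn
function `g` on `X`, equal to `1` on its image and `0` off `V`, makes `(g ∘ k) · w` `ε`-close
to `w`.
-/

open scoped ZeroAtInfty BoundedContinuousFunction
open WeakDual Filter

open Set Topology

namespace ZeroAtInftyContinuousMap

variable {α : Type*} [TopologicalSpace α]

section Vanishing

variable (R : Type*) {β : Type*} [Semiring R] [NormedAddCommGroup β] [Module R β]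
  [ContinuousConstSMul R β]

def vanishingSubmodule (s : Set α) : Submodule R C₀(α, β) where
  carrier := {f | ∀ x ∈ s, f x = 0}
  add_mem' {f g} hf hg x hx := by rw [add_apply, hf x hx, hg x hx, add_zero]
  zero_mem' _ _ := rfl
  smul_mem' c f hf x hx := by rw [smul_apply, hf x hx, smul_zero]

theorem isClosed_vanishingSubmodule (s : Set α) :
    IsClosed (vanishingSubmodule (β := β) R s : Set C₀(α, β)) := by
  have heval (x : α) : Continuous fun f : C₀(α, β) => f x :=
    (continuous_eval_const x : Continuous fun f : α →ᵇ β => f x).comp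
      isometry_toBCF.continuous
  simp only [vanishingSubmodule, Submodule.coe_set_mk, AddSubmonoid.coe_set_mk,
    AddSubsemigroup.coe_set_mk, ofPred_forall]
  exact isClosed_biInter fun x _ => isClosed_eq (heval x) continuous_const

end Vanishing

theorem isCompact_setOf_le_norm {β : Type*} [SeminormedAddCommGroup β] (f : C₀(α, β))
    {ε : ℝ} (hε : 0 < ε) : IsCompact {x | ε ≤ ‖f x‖} := by
  obtain ⟨K, hK, hKf⟩ := mem_cocompact.mp
    ((zero_at_infty f).eventually (Metric.ball_mem_nhds (0 : β) hε))
  refine hK.of_isClosed_subset (isClosed_le continuous_const f.continuous.norm) fun x hx => ?_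
  by_contra hxK
  have : ‖f x‖ < ε := by simpa using hKf hxK
  exact (not_le.mpr this) hx

section BcfMul

variable {R : Type*} [NonUnitalSeminormedRing R]

def bcfMul (f : α →ᵇ R) (w : C₀(α, R)) : C₀(α, R) where
  toFun := f * w
  continuous_toFun := f.continuous.mul w.continuous
  zero_at_infty' := by
    have hw : Tendsto (fun x => ‖f‖ * ‖w x‖) (cocompact α) (𝓝 0) := by
      simpa using (zero_at_infty w).norm.const_mul ‖f‖
    exact squeeze_zero_norm (fun x => norm_mul_le_of_le (f.norm_coe_le_norm x) le_rfl) hw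

end BcfMul

theorem dist_bcfMul_self_le {R : Type*} [SeminormedRing R] (f : α →ᵇ R) (w : C₀(α, R))
    {ε : ℝ} (hε : 0 ≤ ε)
    (hf_one : ∀ x, ε ≤ ‖w x‖ → f x = 1) (hf_le : ∀ x, ‖1 - f x‖ ≤ 1) :
    dist (bcfMul f w) w ≤ ε := by
  rw [← dist_toBCF_eq_dist, BoundedContinuousFunction.dist_le hε]
  intro x
  change dist (f x * w x) (w x) ≤ ε
  rw [dist_eq_norm', ← one_sub_mul]
  by_cases hx : ε ≤ ‖w x‖
  · simp [hf_one x hx, hε]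
  · calc ‖(1 - f x) * w x‖ ≤ 1 * ‖w x‖ := norm_mul_le_of_le (hf_le x) le_rfl
      _ ≤ ε := by rw [one_mul]; exact (not_le.mp hx).le

end ZeroAtInftyContinuousMap

theorem exists_zeroAtInfty_eqOn_one_eqOn_zero {X 𝕜 : Type*} [TopologicalSpace X]
    [RegularSpace X] [LocallyCompactSpace X] [RCLike 𝕜] {s t : Set X} (hs : IsCompact s)
    (ht : IsClosed t) (hd : Disjoint s t) :
    ∃ g : C₀(X, 𝕜), EqOn g 1 s ∧ EqOn g 0 t ∧ ∀ x, ‖1 - g x‖ ≤ 1 := by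
  obtain ⟨g, hg_one, hg_zero, hg_supp, hg_mem⟩ := exists_continuous_one_zero_of_isCompact hs ht hd
  refine ⟨⟨⟨fun x => (g x : 𝕜), by fun_prop⟩,
    (hg_supp.comp_left RCLike.ofReal_zero).is_zero_at_infty⟩, fun x hx => ?_, fun x hx => ?_,
    fun x => ?_⟩
  · simp [hg_one hx]
  · simp [hg_zero hx]
  · change ‖1 - (g x : 𝕜)‖ ≤ 1
    rw [← RCLike.ofReal_one, ← RCLike.ofReal_sub, RCLike.norm_ofReal, abs_le]
    constructor <;> linarith [(hg_mem x).1, (hg_mem x).2]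

theorem pullback_ideal_eq_preimage_ideal_general
    {Z X : Type*} [TopologicalSpace Z] [TopologicalSpace X]
    [LocallyCompactSpace X] [T2Space X]
    (k : C(Z, X)) (V : Set X) (hV : IsOpen V) :
    closure (↑(Submodule.span ℂ
        {w : C₀(Z, ℂ) | ∃ g : C₀(X, ℂ), (∀ x ∉ V, g x = 0) ∧
          ∃ h : C₀(Z, ℂ), ⇑w = fun z => g (k z) * h z}) : Set C₀(Z, ℂ)) =
      {w : C₀(Z, ℂ) | ∀ z, k z ∉ V → w z = 0} := by
  open ZeroAtInftyContinuousMap in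
  refine (closure_minimal ?_ (isClosed_vanishingSubmodule ℂ (k ⁻¹' Vᶜ))).antisymm fun w hw => ?_
  · refine Submodule.span_le.mpr ?_
    rintro w ⟨g, hg, h, hw⟩ z hz
    simp [congrFun hw z, hg _ hz]
  · rw [Metric.mem_closure_iff]
    intro ε hε
    have hSV : Disjoint (k '' {z | ε / 2 ≤ ‖w z‖}) Vᶜ := by
      rw [disjoint_compl_right_iff_subset]
      rintro _ ⟨z, hz, rfl⟩
      by_contra hzV
      have : ε / 2 ≤ 0 := by simpa [hw z hzV] using hz
      linarith
    obtain ⟨g, hg_one, hg_zero, hg_le⟩ := exists_zeroAtInfty_eqOn_one_eqOn_zero (𝕜 := ℂ)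
      ((w.isCompact_setOf_le_norm (half_pos hε)).image k.continuous) hV.isClosed_compl hSV
    refine ⟨ZeroAtInftyContinuousMap.bcfMul (pullbackBCF k g) w,
      Submodule.subset_span ⟨g, fun x hx => hg_zero hx, w, rfl⟩, ?_⟩
    rw [dist_comm]
    exact (ZeroAtInftyContinuousMap.dist_bcfMul_self_le _ w (half_pos hε).le
      (fun z hz => hg_one (mem_image_of_mem k hz)) fun z => hg_le (k z)).trans_lt
      (half_lt_self hε)

/-- For `k : Z → X` continuous between locally compact Hausdorff spaces and `V ⊆ X` open,
the closed ideal `k*(C₀(V))·C₀(Z)` of `C₀(Z)` equals `C₀(k⁻¹(V))`, realised as the ideal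
of functions vanishing off the open set `k⁻¹(V)`. -/
theorem pullback_ideal_eq_preimage_ideal
    {Z X : Type*} [TopologicalSpace Z] [TopologicalSpace X]
    [LocallyCompactSpace Z] [T2Space Z] [LocallyCompactSpace X] [T2Space X]
    (k : C(Z, X)) (V : Set X) (hV : IsOpen V) :
    closure (↑(Submodule.span ℂ
        {w : C₀(Z, ℂ) | ∃ g : C₀(X, ℂ), (∀ x ∉ V, g x = 0) ∧
          ∃ h : C₀(Z, ℂ), ⇑w = fun z => g (k z) * h z}) : Set C₀(Z, ℂ)) =
      {w : C₀(Z, ℂ) | ∀ z, k z ∉ V → w z = 0} :=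
  pullback_ideal_eq_preimage_ideal_general k V hV
end
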